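/- For every choice of gains k₁,k₂,k₃,k₄ > 0 there exists a constant a > 0 (depending only on the gains) such that the bidirectional backstepping feedback satisfies, for every state (ρ,δ,γ) with ρ > 0, |v_b| + |ω_b| ≤ a (r + r² + r³), where r = √(ρ² + δ² + γ²). (This is the cubic bound |v|+|ω| ≤ α̃(|(ρ,δ,γ)|) with α̃ of the form α̃(r) = a(r + r² + r³) used in the prescribed-time and fixed-time designs to show that the inputs remain bounded and converge to zero.) -/

import Mathlib

noncomputable section

open Real

/-- σ(δ) = √(1 + 4k₂²δ²) -/
def sigmaB (k₂ δ : ℝ) : ℝ := Real.sqrt (1 + 4 * k₂ ^ 2 * δ ^ 2)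

/-- backstepping variable z = γ + (1/2) arctan(2k₂δ) -/
def zB (k₂ δ γ : ℝ) : ℝ := γ + (1 / 2) * Real.arctan (2 * k₂ * δ)

/-- ψ(r,s) = (sin(r−s) + sin s)/r for r ≠ 0, ψ(0,s) = cos s -/
def psiB (r s : ℝ) : ℝ :=
  if r = 0 then Real.cos s else (Real.sin (r - s) + Real.sin s) / r

/-- ψ₂(r,s) = (−cos(r−s) + cos s)/r for r ≠ 0, ψ₂(0,s) = −sin s -/
def psiB2 (r s : ℝ) : ℝ :=
  if r = 0 then -Real.sin s else (-Real.cos (r - s) + Real.cos s) / r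

/-- bidirectional forward velocity v = k₁ ρ σ(δ) cos γ -/
def vB (k₁ k₂ ρ δ γ : ℝ) : ℝ := k₁ * ρ * sigmaB k₂ δ * Real.cos γ

/-- ω̃ of the bidirectional backstepping feedback -/
def omTildeB (k₁ k₂ k₃ k₄ ρ δ γ : ℝ) : ℝ :=
  k₄ * zB k₂ δ γ
    - k₃ * ρ ^ 2 * sigmaB k₂ δ * psiB2 (2 * zB k₂ δ γ) (2 * γ)
    + k₃ * δ * sigmaB k₂ δ * psiB (2 * zB k₂ δ γ) (2 * γ)
    + (k₁ * k₂ / sigmaB k₂ δ ^ 2)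
        * (sigmaB k₂ δ * psiB (2 * zB k₂ δ γ) (2 * γ) * zB k₂ δ γ - k₂ * δ)

/-- bidirectional angular velocity ω = (v/ρ) sin γ + ω̃ -/
def omB (k₁ k₂ k₃ k₄ ρ δ γ : ℝ) : ℝ :=
  (vB k₁ k₂ ρ δ γ / ρ) * Real.sin γ + omTildeB k₁ k₂ k₃ k₄ ρ δ γ

/-- Lyapunov function V = ρ² + δ² + q² z², q = √(k₁/k₃) -/
def VB (k₁ k₂ k₃ ρ δ γ : ℝ) : ℝ :=
  ρ ^ 2 + δ ^ 2 + Real.sqrt (k₁ / k₃) ^ 2 * zB k₂ δ γ ^ 2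

/-!
Every ingredient of the feedback is bounded by a polynomial in `r`: `|ρ|, |δ|, |γ| ≤ r`;
`1 ≤ σ(δ) ≤ 1 + 2 k₂ |δ|`; `|z| ≤ |γ| + k₂ |δ|` because `arctan` is 1-Lipschitz; and
`|ψ|, |ψ₂| ≤ 1` because their numerators are differences of `sin` (resp. `cos`) at two points
whose distance is the absolute value of the denominator, and `sin`, `cos` are 1-Lipschitz. The triangle inequality then bounds
`|v_b| + |ω_b|` by a cubic in `r` with nonnegative coefficients and no constant term.
-/

lemma lipschitzWith_arctan : LipschitzWith 1 arctan :=
  lipschitzWith_of_nnnorm_deriv_le differentiable_arctan fun x => by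
    rw [Real.deriv_arctan, ← NNReal.coe_le_coe, coe_nnnorm, Real.norm_eq_abs, NNReal.coe_one,
      abs_of_pos (by positivity)]
    exact div_le_one_of_le₀ (by nlinarith [sq_nonneg x]) (by positivity)

lemma abs_arctan_le (x : ℝ) : |arctan x| ≤ |x| := by
  simpa [edist_dist, Real.dist_eq] using! lipschitzWith_arctan x 0

lemma abs_psiB_le_one (r s : ℝ) : |psiB r s| ≤ 1 := by
  unfold psiB
  split_ifs with hr
  · exact abs_cos_le_one s
  · rw [abs_div, div_le_one (abs_pos.2 hr)]
    simpa [sin_neg] using abs_sin_sub_sin_le (r - s) (-s)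

lemma abs_psiB2_le_one (r s : ℝ) : |psiB2 r s| ≤ 1 := by
  unfold psiB2
  split_ifs with hr
  · simpa using abs_sin_le_one s
  · rw [abs_div, div_le_one (abs_pos.2 hr)]
    have h := abs_cos_sub_cos_le (-s) (r - s)
    rwa [cos_neg, ← neg_add_eq_sub, show -s - (r - s) = -r by ring, abs_neg] at h

lemma one_le_sigmaB (k₂ δ : ℝ) : 1 ≤ sigmaB k₂ δ :=
  one_le_sqrt.2 (by nlinarith [sq_nonneg (k₂ * δ)])

lemma sigmaB_le {k₂ : ℝ} (hk₂ : 0 ≤ k₂) (δ : ℝ) : sigmaB k₂ δ ≤ 1 + 2 * k₂ * |δ| :=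
  sqrt_le_iff.2 ⟨by positivity, by nlinarith [sq_abs δ, mul_nonneg hk₂ (abs_nonneg δ)]⟩

lemma abs_zB_le {k₂ : ℝ} (hk₂ : 0 ≤ k₂) (δ γ : ℝ) : |zB k₂ δ γ| ≤ |γ| + k₂ * |δ| := by
  have h := abs_arctan_le (2 * k₂ * δ)
  rw [abs_mul, abs_mul, abs_two, abs_of_nonneg hk₂] at h
  calc |zB k₂ δ γ| ≤ |γ| + |1 / 2 * arctan (2 * k₂ * δ)| := abs_add_le _ _
    _ ≤ |γ| + k₂ * |δ| := by rw [abs_mul]; norm_num; linarith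

lemma abs_vB_le {k₁ : ℝ} (hk₁ : 0 ≤ k₁) (k₂ ρ δ γ : ℝ) :
    |vB k₁ k₂ ρ δ γ| ≤ k₁ * |ρ| * sigmaB k₂ δ := by
  have hσ : 0 ≤ sigmaB k₂ δ := zero_le_one.trans (one_le_sigmaB k₂ δ)
  rw [vB, abs_mul, abs_mul, abs_mul, abs_of_nonneg hk₁, abs_of_nonneg hσ]
  exact mul_le_of_le_one_right (by positivity) (abs_cos_le_one γ)

lemma abs_angularFeedback_le {k₁ k₂ k₃ k₄ : ℝ} (hk₁ : 0 ≤ k₁) (hk₂ : 0 ≤ k₂) (hk₃ : 0 ≤ k₃)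
    (hk₄ : 0 ≤ k₄) (ρ δ γ : ℝ) :
    |k₁ * sigmaB k₂ δ * cos γ * sin γ + omTildeB k₁ k₂ k₃ k₄ ρ δ γ|
      ≤ k₁ * sigmaB k₂ δ * |γ| + k₄ * |zB k₂ δ γ| + k₃ * ρ ^ 2 * sigmaB k₂ δ
        + k₃ * |δ| * sigmaB k₂ δ + k₁ * k₂ * (sigmaB k₂ δ * |zB k₂ δ γ| + k₂ * |δ|) := by
  unfold omTildeB
  set σ := sigmaB k₂ δ
  set z := zB k₂ δ γ
  set p := psiB (2 * z) (2 * γ)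
  set p₂ := psiB2 (2 * z) (2 * γ)
  have hσ : 1 ≤ σ := one_le_sigmaB k₂ δ
  have hσ₀ : 0 ≤ σ := zero_le_one.trans hσ
  have hA : |k₁ * σ * cos γ * sin γ| ≤ k₁ * σ * |γ| := by
    rw [abs_mul, abs_mul, abs_mul, abs_of_nonneg hk₁, abs_of_nonneg hσ₀]
    calc k₁ * σ * |cos γ| * |sin γ| ≤ k₁ * σ * 1 * |γ| := by
          gcongr k₁ * σ * ?_ * ?_
          exacts [abs_cos_le_one γ, abs_sin_le_abs]
      _ = k₁ * σ * |γ| := by ring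
  have hB₁ : |k₄ * z| = k₄ * |z| := by rw [abs_mul, abs_of_nonneg hk₄]
  have hB₂ : |k₃ * ρ ^ 2 * σ * p₂| ≤ k₃ * ρ ^ 2 * σ := by
    rw [abs_mul, abs_of_nonneg (by positivity)]
    exact mul_le_of_le_one_right (by positivity) (abs_psiB2_le_one _ _)
  have hB₃ : |k₃ * δ * σ * p| ≤ k₃ * |δ| * σ := by
    rw [abs_mul, abs_mul, abs_mul, abs_of_nonneg hk₃, abs_of_nonneg hσ₀]
    exact mul_le_of_le_one_right (by positivity) (abs_psiB_le_one _ _)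
  have hB₄ : |k₁ * k₂ / σ ^ 2 * (σ * p * z - k₂ * δ)| ≤ k₁ * k₂ * (σ * |z| + k₂ * |δ|) := by
    rw [abs_mul, abs_of_nonneg (by positivity)]
    gcongr
    · exact div_le_self (by positivity) (one_le_pow₀ hσ)
    · calc |σ * p * z - k₂ * δ| ≤ |σ * p * z| + |k₂ * δ| := abs_sub _ _
        _ ≤ σ * |z| + k₂ * |δ| := by
          rw [abs_mul, abs_mul, abs_mul, abs_of_nonneg hσ₀, abs_of_nonneg hk₂]
          have hp : σ * |p| ≤ σ := mul_le_of_le_one_right hσ₀ (abs_psiB_le_one _ _)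
          linarith [mul_le_mul_of_nonneg_right hp (abs_nonneg z)]
  calc _ ≤ |k₁ * σ * cos γ * sin γ| + (|k₄ * z| + |k₃ * ρ ^ 2 * σ * p₂| + |k₃ * δ * σ * p|
          + |k₁ * k₂ / σ ^ 2 * (σ * p * z - k₂ * δ)|) :=
        (abs_add_le _ _).trans <| add_le_add_right ((abs_add_le _ _).trans <|
          add_le_add_left ((abs_add_le _ _).trans <| add_le_add_left (abs_sub _ _) _) _) _
    _ ≤ _ := by linarith

lemma mul_add_mul_sq_add_mul_cube_le {c₁ c₂ c₃ r : ℝ} (h₁ : 0 ≤ c₁) (h₂ : 0 ≤ c₂) (h₃ : 0 ≤ c₃)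
    (hr : 0 ≤ r) : c₁ * r + c₂ * r ^ 2 + c₃ * r ^ 3 ≤ (c₁ + c₂ + c₃) * (r + r ^ 2 + r ^ 3) := by
  nlinarith [mul_nonneg h₁ (pow_nonneg hr 2), mul_nonneg h₁ (pow_nonneg hr 3),
    mul_nonneg h₂ hr, mul_nonneg h₂ (pow_nonneg hr 3),
    mul_nonneg h₃ hr, mul_nonneg h₃ (pow_nonneg hr 2)]

theorem bidirectional_feedback_cubic_bound
    (k₁ k₂ k₃ k₄ : ℝ) (hk₁ : 0 < k₁) (hk₂ : 0 < k₂) (hk₃ : 0 < k₃) (hk₄ : 0 < k₄) :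
    ∃ a : ℝ, 0 < a ∧
      ∀ ρ δ γ : ℝ, 0 < ρ →
        |vB k₁ k₂ ρ δ γ|
          + |k₁ * sigmaB k₂ δ * Real.cos γ * Real.sin γ
              + omTildeB k₁ k₂ k₃ k₄ ρ δ γ|
        ≤ a * (Real.sqrt (ρ ^ 2 + δ ^ 2 + γ ^ 2)
            + Real.sqrt (ρ ^ 2 + δ ^ 2 + γ ^ 2) ^ 2
            + Real.sqrt (ρ ^ 2 + δ ^ 2 + γ ^ 2) ^ 3) := by
  refine ⟨(2 * k₁ + k₄ * (1 + k₂) + k₃ + k₁ * k₂ * (1 + k₂) + k₁ * k₂ ^ 2)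
    + (4 * k₁ * k₂ + k₃ + 2 * k₂ * k₃ + 2 * k₁ * k₂ ^ 2 * (1 + k₂)) + 2 * k₂ * k₃,
    by positivity, fun ρ δ γ _ => ?_⟩
  set r := √(ρ ^ 2 + δ ^ 2 + γ ^ 2)
  have hρr : |ρ| ≤ r := abs_le_sqrt (by nlinarith)
  have hρr₂ : ρ ^ 2 ≤ r ^ 2 := sq_le_sq' (neg_le_of_abs_le hρr) (le_of_abs_le hρr)
  have hδr : |δ| ≤ r := abs_le_sqrt (by nlinarith)
  have hγr : |γ| ≤ r := abs_le_sqrt (by nlinarith)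
  have hσ₀ : 0 ≤ sigmaB k₂ δ := zero_le_one.trans (one_le_sigmaB k₂ δ)
  have hσ : sigmaB k₂ δ ≤ 1 + 2 * k₂ * r := (sigmaB_le hk₂.le δ).trans (by gcongr)
  have hz : |zB k₂ δ γ| ≤ (1 + k₂) * r := (abs_zB_le hk₂.le δ γ).trans (by nlinarith)
  calc _ ≤ k₁ * |ρ| * sigmaB k₂ δ + (k₁ * sigmaB k₂ δ * |γ| + k₄ * |zB k₂ δ γ|
          + k₃ * ρ ^ 2 * sigmaB k₂ δ + k₃ * |δ| * sigmaB k₂ δ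
          + k₁ * k₂ * (sigmaB k₂ δ * |zB k₂ δ γ| + k₂ * |δ|)) :=
        add_le_add (abs_vB_le hk₁.le k₂ ρ δ γ)
          (abs_angularFeedback_le hk₁.le hk₂.le hk₃.le hk₄.le ρ δ γ)
    _ ≤ k₁ * r * (1 + 2 * k₂ * r) + (k₁ * (1 + 2 * k₂ * r) * r + k₄ * ((1 + k₂) * r)
          + k₃ * r ^ 2 * (1 + 2 * k₂ * r) + k₃ * r * (1 + 2 * k₂ * r)
          + k₁ * k₂ * ((1 + 2 * k₂ * r) * ((1 + k₂) * r) + k₂ * r)) := by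
        gcongr
    _ = (2 * k₁ + k₄ * (1 + k₂) + k₃ + k₁ * k₂ * (1 + k₂) + k₁ * k₂ ^ 2) * r
          + (4 * k₁ * k₂ + k₃ + 2 * k₂ * k₃ + 2 * k₁ * k₂ ^ 2 * (1 + k₂)) * r ^ 2
          + 2 * k₂ * k₃ * r ^ 3 := by ring
    _ ≤ _ := mul_add_mul_sq_add_mul_cube_le (by positivity) (by positivity) (by positivity)
          (sqrt_nonneg _)

end
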